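/- arXiv:1302.1629 — 5 statements merged into one kernel-verified Lean document; each statement's English description precedes it below -/
import Mathlib

section
/- In the root system of type B_l, letting t = 2r_1 + r_2 + ... + r_l, the Coxeter element w = w_1 ... w_l satisfies w^i(t) = r_{i+1} for 1 ≤ i ≤ l-1. -/
open Matrix

/-- The standard basis vector `e k` of `ℝ^n` (0-indexed). -/
noncomputable def basisVec (n k : ℕ) : Fin n → ℝ := fun j => if (j : ℕ) = k then 1 else 0

/-- Reflection through the hyperplane perpendicular to `v`. -/
noncomputable def reflect {n : ℕ} (v : Fin n → ℝ) (x : Fin n → ℝ) : Fin n → ℝ :=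
  x - (2 * (v ⬝ᵥ x) / (v ⬝ᵥ v)) • v

/-!
Here `r_1 = e_0` and `r_i = e_{i-1} - e_{i-2}`, so `w_1` negates the first coordinate and `w_i`
(`i ≥ 2`) swaps two adjacent ones. Hence `w = w_1 ⋯ w_l` sends `e_k` to `e_{k+1}` for `k < l - 1`
and `e_{l-1}` to `-e_0`. The highest root telescopes to `t = e_0 + e_{l-1}`, so `w t = e_1 - e_0 = r_2`,
and `w r_{i+1} = r_{i+2}` as long as `i + 1 < l`.
-/

section Reflections

variable {n : ℕ}

lemma basisVec_eq_single {k : ℕ} (hk : k < n) : basisVec n k = Pi.single ⟨k, hk⟩ 1 := by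
  funext j
  simp [basisVec, Pi.single_apply, Fin.ext_iff]

lemma reflect_single (i : Fin n) (x : Fin n → ℝ) :
    reflect (Pi.single i 1) x = Function.update x i (-x i) := by
  funext j
  by_cases hj : j = i
  · subst hj
    simp only [reflect, single_dotProduct, dotProduct_single, Pi.single_eq_same, one_mul, mul_one,
      div_one, Pi.sub_apply, Pi.smul_apply, smul_eq_mul, Function.update_self]
    ring
  · simp [reflect, single_dotProduct, hj]

lemma reflect_single_sub_single {i j : Fin n} (hij : i ≠ j) (x : Fin n → ℝ) :
    reflect (Pi.single i 1 - Pi.single j 1) x = x ∘ Equiv.swap i j := by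
  have hdot : ∀ y : Fin n → ℝ, (Pi.single i 1 - Pi.single j 1) ⬝ᵥ y = y i - y j := by
    intro y; simp [sub_dotProduct, single_dotProduct]
  funext k
  simp only [reflect, hdot, Pi.sub_apply, Pi.smul_apply, smul_eq_mul, Function.comp_apply,
    Equiv.swap_apply_def, Pi.single_apply, if_neg hij, if_neg hij.symm]
  split_ifs <;> first | (exfalso; grind) | (subst_vars; ring)

end Reflections

lemma List.foldr_comp_eq_comp {α β : Type*} (g : α → β → β) (h : β → β) (L : List α) :
    L.foldr (fun k f => g k ∘ f) h = L.foldr (fun k f => g k ∘ f) id ∘ h := by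
  induction L with
  | nil => rfl
  | cons a L ih => simp only [List.foldr_cons, ih, Function.comp_assoc]

section Coxeter

variable {n : ℕ}

/-- The Coxeter element of type `B_n` in coordinates: `e_k ↦ e_{k+1}` and `e_{n-1} ↦ -e_0`. -/
def coxeterB (x : Fin n → ℝ) : Fin n → ℝ := fun j =>
  if (j : ℕ) = 0 then -x ⟨n - 1, by have := j.2; omega⟩ else x ⟨j - 1, by omega⟩

variable (r : ℕ → Fin n → ℝ)

lemma foldr_reflect_range'_apply
    (hr : ∀ i, 2 ≤ i → i ≤ n → r i = basisVec n (i - 1) - basisVec n (i - 2))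
    {m : ℕ} (hm : m < n) (x : Fin n → ℝ) (j : Fin n) :
    (List.range' 1 m).foldr (fun k f => reflect (r (k + 1)) ∘ f) id x j =
      if (j : ℕ) = 0 then x ⟨m, hm⟩ else if (j : ℕ) ≤ m then x ⟨j - 1, by omega⟩ else x j := by
  induction m generalizing x with
  | zero =>
    simp only [List.range'_zero, List.foldr_nil, id]
    split_ifs <;> first | omega | (congr 1 <;> ext <;> simp <;> omega)
  | succ m ih =>
    have hswap : reflect (r (m + 2)) x = x ∘ Equiv.swap ⟨m + 1, hm⟩ ⟨m, by omega⟩ := by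
      rw [hr (m + 2) (by omega) hm, show m + 2 - 1 = m + 1 by omega, Nat.add_sub_cancel,
        basisVec_eq_single hm, basisVec_eq_single (by omega)]
      exact reflect_single_sub_single (by simp) x
    rw [List.range'_concat, List.foldr_append, List.foldr_comp_eq_comp]
    simp only [List.foldr_cons, List.foldr_nil, Function.comp_id, Function.comp_apply,
      show 1 + 1 * m + 1 = m + 2 by omega, hswap, ih (by omega)]
    simp only [Equiv.swap_apply_def, Fin.ext_iff]
    split_ifs <;> first | omega | (congr 1 <;> ext <;> simp <;> omega)

lemma foldr_reflect_range_eq_coxeterB (hr1 : r 1 = basisVec n 0)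
    (hr : ∀ i, 2 ≤ i → i ≤ n → r i = basisVec n (i - 1) - basisVec n (i - 2)) :
    (List.range n).foldr (fun k f => reflect (r (k + 1)) ∘ f) id = coxeterB := by
  funext x j
  obtain ⟨m, rfl⟩ : ∃ m, n = m + 1 := ⟨n - 1, by have := j.pos; omega⟩
  rw [List.range_eq_range', List.range'_succ]
  simp only [List.foldr_cons, Function.comp_apply, hr1, basisVec_eq_single (Nat.succ_pos m),
    reflect_single, Function.update_apply, foldr_reflect_range'_apply r hr (Nat.lt_succ_self m),
    coxeterB, Fin.ext_iff]
  split_ifs <;> first | omega | rfl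

end Coxeter

section CoxeterB

variable {n : ℕ}

lemma coxeterB_add (x y : Fin n → ℝ) : coxeterB (x + y) = coxeterB x + coxeterB y := by
  funext j
  simp only [coxeterB, Pi.add_apply]
  split_ifs <;> ring

lemma coxeterB_sub (x y : Fin n → ℝ) : coxeterB (x - y) = coxeterB x - coxeterB y := by
  funext j
  simp only [coxeterB, Pi.sub_apply]
  split_ifs <;> ring

lemma coxeterB_basisVec {k : ℕ} (hk : k + 1 < n) :
    coxeterB (basisVec n k) = basisVec n (k + 1) := by
  funext j
  simp only [coxeterB, basisVec]
  split_ifs <;> first | omega | norm_num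

lemma coxeterB_basisVec_last : coxeterB (basisVec n (n - 1)) = -basisVec n 0 := by
  funext j
  simp only [coxeterB, basisVec, Pi.neg_apply]
  split_ifs <;> first | omega | norm_num

end CoxeterB

lemma Finset.sum_Icc_two_sub {M : Type*} [AddCommGroup M] (f : ℕ → M) (l : ℕ) :
    ∑ k ∈ Finset.Icc 2 l, (f (k - 1) - f (k - 2)) = f (l - 1) - f 0 := by
  rw [← Finset.Ico_add_one_right_eq_Icc, Finset.sum_Ico_eq_sum_range]
  simp only [show ∀ k, 2 + k - 1 = k + 1 by omega, Nat.add_sub_cancel_left]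
  rw [Finset.sum_range_sub, show l + 1 - 2 = l - 1 by omega]

theorem stmt_5_general (l : ℕ)
    (r : ℕ → Fin l → ℝ)
    (hr1 : r 1 = basisVec l 0)
    (hr : ∀ i, 2 ≤ i → i ≤ l → r i = basisVec l (i - 1) - basisVec l (i - 2))
    (w : (Fin l → ℝ) → (Fin l → ℝ))
    (hw : w = (List.range l).foldr (fun k f => reflect (r (k + 1)) ∘ f) id)
    (t : Fin l → ℝ) (ht : t = (2 : ℝ) • r 1 + ∑ k ∈ Finset.Icc 2 l, r k) :
    ∀ i, 1 ≤ i → i ≤ l - 1 → w^[i] t = r (i + 1) := by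
  rw [foldr_reflect_range_eq_coxeterB r hr1 hr] at hw
  subst hw
  have ht' : t = basisVec l 0 + basisVec l (l - 1) := by
    rw [ht, Finset.sum_congr rfl fun k hk => hr k (Finset.mem_Icc.1 hk).1 (Finset.mem_Icc.1 hk).2,
      Finset.sum_Icc_two_sub, hr1, two_smul]
    abel
  intro i hi hil
  induction i, hi using Nat.le_induction with
  | base =>
    rw [Function.iterate_one, ht', coxeterB_add, coxeterB_basisVec (by omega),
      coxeterB_basisVec_last, hr 2 le_rfl (by omega)]
    abel
  | succ i hi ih =>
    rw [Function.iterate_succ_apply', ih (by omega), hr (i + 1) (by omega) (by omega),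
      hr (i + 1 + 1) (by omega) (by omega), coxeterB_sub, coxeterB_basisVec (by omega),
      coxeterB_basisVec (by omega)]
    congr 2; omega

/-- Type `B_l`: with `t = 2r_1 + r_2 + ⋯ + r_l` the highest root, the Coxeter element
`w = w_1 ⋯ w_l` satisfies `w^i (t) = r_{i+1}` for `1 ≤ i ≤ l-1`. -/
theorem stmt_5 (l : ℕ) (hl : 2 ≤ l)
    (r : ℕ → Fin l → ℝ)
    (hr1 : r 1 = basisVec l 0)
    (hr : ∀ i, 2 ≤ i → i ≤ l → r i = basisVec l (i - 1) - basisVec l (i - 2))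
    (w : (Fin l → ℝ) → (Fin l → ℝ))
    (hw : w = (List.range l).foldr (fun k f => reflect (r (k + 1)) ∘ f) id)
    (t : Fin l → ℝ) (ht : t = (2 : ℝ) • r 1 + ∑ k ∈ Finset.Icc 2 l, r k) :
    ∀ i, 1 ≤ i → i ≤ l - 1 → w^[i] t = r (i + 1) :=
  stmt_5_general l r hr1 hr w hw t ht
end

section
/- In the root system of type D_l, for the Coxeter element w = w_1 ... w_l and any i with 1 ≤ i ≤ l-3, both w^i(r_1) and w^i(r_2) are of the form y + r_3 + r_4 + ... + r_{i+2}, where y ∈ {r_1, r_2}. In particular w^i(r_1) and w^i(r_2) lie in the root subsystem generated by r_1,...,r_{l-1}. -/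
open Matrix

/-!
In coordinates the Coxeter element `w = s₁ ⋯ sₗ` is the signed permutation
`e_m ↦ e_{m-1}` (`1 ≤ m ≤ l-2`), `e₀ ↦ -e_{l-2}`, `e_{l-1} ↦ -e_{l-1}`: the reflections
`s₃, …, sₗ` compose to a cyclic shift of the first `l-1` coordinates, and `s₁ s₂` negates
the last two. Hence `w r₁ = r₂ + r₃`, `w r₂ = r₁ + r₃` and `w r_k = r_{k+1}` for `3 ≤ k < l`,
so by additivity `w` sends `y + r₃ + ⋯ + r_{i+2}` to `y' + r₃ + ⋯ + r_{i+3}`, where `y'` is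
the other one of `r₁, r₂`. Such a sum involves only `r₁, …, r_{l-1}` as long as `i ≤ l - 3`.
-/

lemma basisVec_dotProduct {n k : ℕ} (hk : k < n) (x : Fin n → ℝ) :
    basisVec n k ⬝ᵥ x = x ⟨k, hk⟩ := by
  have hval (i : Fin n) : (i : ℕ) = k ↔ i = ⟨k, hk⟩ := by rw [Fin.ext_iff]
  simp [basisVec, dotProduct, hval]

lemma reflect_basisVec_sub_apply {n p q : ℕ} (hp : p < n) (hq : q < n) (hpq : p ≠ q)
    (x : Fin n → ℝ) (j : Fin n) :
    reflect (basisVec n p - basisVec n q) x j =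
      if (j : ℕ) = p then x ⟨q, hq⟩ else if (j : ℕ) = q then x ⟨p, hp⟩ else x j := by
  have hnorm : (basisVec n p - basisVec n q) ⬝ᵥ (basisVec n p - basisVec n q) = 2 := by
    norm_num [sub_dotProduct, basisVec_dotProduct hp, basisVec_dotProduct hq, basisVec, hpq,
      Ne.symm hpq]
  simp only [reflect, hnorm, sub_dotProduct, basisVec_dotProduct hp, basisVec_dotProduct hq,
    Pi.sub_apply, Pi.smul_apply, smul_eq_mul, basisVec]
  split_ifs <;> first | omega | (subst_vars; ring)

lemma reflect_basisVec_add_apply {n p q : ℕ} (hp : p < n) (hq : q < n) (hpq : p ≠ q)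
    (x : Fin n → ℝ) (j : Fin n) :
    reflect (basisVec n p + basisVec n q) x j =
      if (j : ℕ) = p then -x ⟨q, hq⟩ else if (j : ℕ) = q then -x ⟨p, hp⟩ else x j := by
  have hnorm : (basisVec n p + basisVec n q) ⬝ᵥ (basisVec n p + basisVec n q) = 2 := by
    norm_num [add_dotProduct, basisVec_dotProduct hp, basisVec_dotProduct hq, basisVec, hpq,
      Ne.symm hpq]
  simp only [reflect, hnorm, add_dotProduct, basisVec_dotProduct hp, basisVec_dotProduct hq,
    Pi.sub_apply, Pi.add_apply, Pi.smul_apply, smul_eq_mul, basisVec]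
  split_ifs <;> first | omega | (subst_vars; ring)

lemma foldr_reflect_adjacent_apply {n : ℕ} (m : ℕ) {a : ℕ} (ha : a < n) (hm : m ≤ a)
    (x : Fin n → ℝ) (j : Fin n) :
    (List.range m).foldr
        (fun k f => reflect (basisVec n (a - 1 - k) - basisVec n (a - k)) ∘ f) id x j =
      if h : a - m ≤ j ∧ (j : ℕ) < a then x ⟨j + 1, by omega⟩
      else if (j : ℕ) = a then x ⟨a - m, by omega⟩ else x j := by
  induction m generalizing a x j with
  | zero =>
    simp only [List.range_zero, List.foldr_nil, id_eq]
    split_ifs with h1 h2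
    · omega
    · congr; ext; simp [h2]
    · rfl
  | succ m ih =>
    have hshift :
        (fun k f => reflect (basisVec n (a - 1 - (k + 1)) - basisVec n (a - (k + 1))) ∘ f) =
          fun k (f : (Fin n → ℝ) → Fin n → ℝ) =>
            reflect (basisVec n (a - 1 - 1 - k) - basisVec n (a - 1 - k)) ∘ f := by
      funext k f; congr 4 <;> omega
    rw [List.range_succ_eq_map, List.foldr_cons, List.foldr_map, hshift, Function.comp_apply,
      Nat.sub_zero, Nat.sub_zero, reflect_basisVec_sub_apply (by omega) ha (by omega)]
    simp only [ih (a := a - 1) (by omega) (by omega)]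
    split_ifs <;> grind

noncomputable def coxeterD (l : ℕ) : (Fin l → ℝ) →ₗ[ℝ] Fin l → ℝ where
  toFun x j := if h : (j : ℕ) < l - 2 then x ⟨j + 1, by omega⟩
    else if (j : ℕ) = l - 2 then -x ⟨0, by omega⟩ else -x j
  map_add' x y := by ext j; dsimp only [Pi.add_apply]; split_ifs <;> ring
  map_smul' c x := by
    ext j; dsimp only [Pi.smul_apply, smul_eq_mul, RingHom.id_apply]; split_ifs <;> ring

lemma coxeterD_basisVec {l m : ℕ} (hm : 1 ≤ m) (hml : m ≤ l - 2) :
    coxeterD l (basisVec l m) = basisVec l (m - 1) := by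
  ext j
  simp only [coxeterD, LinearMap.coe_mk, AddHom.coe_mk, basisVec]
  split_ifs <;> first | omega | rfl | grind

lemma coxeterD_basisVec_last {l : ℕ} (hl : 2 ≤ l) :
    coxeterD l (basisVec l (l - 1)) = -basisVec l (l - 1) := by
  ext j
  simp only [coxeterD, LinearMap.coe_mk, AddHom.coe_mk, basisVec, Pi.neg_apply]
  split_ifs <;> first | omega | contradiction | norm_num

theorem foldr_reflect_eq_coxeterD {l : ℕ} (hl : 2 ≤ l) {r : ℕ → Fin l → ℝ}
    (hr1 : r 1 = basisVec l (l - 2) + basisVec l (l - 1))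
    (hr2 : r 2 = basisVec l (l - 2) - basisVec l (l - 1))
    (hr : ∀ i, 3 ≤ i → i ≤ l → r i = basisVec l (l - i) - basisVec l (l - i + 1)) :
    (List.range l).foldr (fun k f => reflect (r (k + 1)) ∘ f) id = coxeterD l := by
  have htail :
      ((List.range (l - 2)).map (2 + ·)).foldr (fun k f => reflect (r (k + 1)) ∘ f) id =
        (List.range (l - 2)).foldr (fun k f =>
          reflect (basisVec l (l - 2 - 1 - k) - basisVec l (l - 2 - k)) ∘ f) id := by
    rw [List.foldr_map]
    refine List.foldr_ext _ _ _ fun k hk f => ?_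
    rw [List.mem_range] at hk
    rw [hr _ (by omega) (by omega), show l - (2 + k + 1) + 1 = l - 2 - k by omega,
      show l - (2 + k + 1) = l - 2 - 1 - k by omega]
  have hsplit : List.range l = List.range 2 ++ (List.range (l - 2)).map (2 + ·) := by
    rw [← List.range_add]; congr; omega
  ext x j
  rw [hsplit, List.foldr_append, htail]
  simp only [List.range_succ, List.range_zero, List.nil_append, List.cons_append,
    List.foldr_cons, List.foldr_nil, Function.comp_apply, zero_add]
  rw [hr1, reflect_basisVec_add_apply (by omega) (by omega) (by omega)]
  have hS := foldr_reflect_adjacent_apply (n := l) (l - 2) (a := l - 2) (by omega) le_rfl x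
  simp only [hr2, reflect_basisVec_sub_apply (n := l) (p := l - 2) (q := l - 1) (by omega)
    (by omega) (by omega), hS, coxeterD, LinearMap.coe_mk, AddHom.coe_mk]
  split_ifs <;> first | omega | rfl | grind

theorem iterate_apply_fork_root {M F : Type*} [AddCommMonoid M] [FunLike F M M]
    [AddMonoidHomClass F M M] (f : F) (r : ℕ → M) {n : ℕ}
    (h1 : f (r 1) = r 2 + r 3) (h2 : f (r 2) = r 1 + r 3)
    (hchain : ∀ k, 3 ≤ k → k < n + 2 → f (r k) = r (k + 1))
    {j₀ : ℕ} (hj₀ : j₀ = 1 ∨ j₀ = 2) {i : ℕ} (hi : i ≤ n) :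
    ∃ j, (j = 1 ∨ j = 2) ∧ (⇑f)^[i] (r j₀) = r j + ∑ k ∈ Finset.Icc 3 (i + 2), r k := by
  induction i with
  | zero => exact ⟨j₀, hj₀, by simp⟩
  | succ i ih =>
    obtain ⟨j, hj, hfj⟩ := ih (by omega)
    have hshift : ∑ k ∈ Finset.Icc 3 (i + 2), f (r k) = ∑ k ∈ Finset.Icc 4 (i + 3), r k := by
      rw [← Finset.map_add_right_Icc 3 (i + 2) 1, Finset.sum_map]
      exact Finset.sum_congr rfl fun k hk => hchain k (Finset.mem_Icc.1 hk).1 (by grind)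
    have hswap : ∃ j', (j' = 1 ∨ j' = 2) ∧ f (r j) = r j' + r 3 := by
      rcases hj with rfl | rfl
      exacts [⟨2, .inr rfl, h1⟩, ⟨1, .inl rfl, h2⟩]
    obtain ⟨j', hj', hfj'⟩ := hswap
    refine ⟨j', hj', ?_⟩
    rw [Function.iterate_succ_apply', hfj, map_add, map_sum, hfj', hshift, add_assoc,
      ← Finset.sum_insert (by simp)]
    congr 2
    exact Finset.insert_Icc_add_one_left_eq_Icc (by omega)

theorem Finset.exists_intCast_smul_sum_eq_sum {ι R M : Type*} [Ring R] [AddCommGroup M]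
    [Module R M] {s t : Finset ι} (hst : s ⊆ t) (f : ι → M) :
    ∃ c : ι → ℤ, ∑ k ∈ s, f k = ∑ k ∈ t, (c k : R) • f k := by
  classical
  refine ⟨fun k => if k ∈ s then 1 else 0, ?_⟩
  simp only [Int.cast_ite, Int.cast_one, Int.cast_zero, ite_smul, one_smul, zero_smul]
  rw [Finset.sum_ite_mem, Finset.inter_eq_right.2 hst]

section RootsD

variable {l : ℕ} {r : ℕ → Fin l → ℝ}

lemma coxeterD_apply_root_one (hl : 3 ≤ l) (hr1 : r 1 = basisVec l (l - 2) + basisVec l (l - 1))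
    (hr2 : r 2 = basisVec l (l - 2) - basisVec l (l - 1))
    (hr3 : r 3 = basisVec l (l - 3) - basisVec l (l - 3 + 1)) :
    coxeterD l (r 1) = r 2 + r 3 := by
  rw [hr1, hr2, hr3, map_add, coxeterD_basisVec (by omega) le_rfl,
    coxeterD_basisVec_last (by omega), show l - 3 + 1 = l - 2 by omega,
    show l - 2 - 1 = l - 3 by omega]
  abel

lemma coxeterD_apply_root_two (hl : 3 ≤ l) (hr1 : r 1 = basisVec l (l - 2) + basisVec l (l - 1))
    (hr2 : r 2 = basisVec l (l - 2) - basisVec l (l - 1))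
    (hr3 : r 3 = basisVec l (l - 3) - basisVec l (l - 3 + 1)) :
    coxeterD l (r 2) = r 1 + r 3 := by
  rw [hr1, hr2, hr3, map_sub, coxeterD_basisVec (by omega) le_rfl,
    coxeterD_basisVec_last (by omega), show l - 3 + 1 = l - 2 by omega,
    show l - 2 - 1 = l - 3 by omega]
  abel

lemma coxeterD_apply_root_of_three_le
    (hr : ∀ i, 3 ≤ i → i ≤ l → r i = basisVec l (l - i) - basisVec l (l - i + 1))
    {k : ℕ} (hk : 3 ≤ k) (hkl : k < l) :
    coxeterD l (r k) = r (k + 1) := by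
  rw [hr k hk hkl.le, hr (k + 1) (by omega) hkl, map_sub,
    coxeterD_basisVec (by omega) (by omega), coxeterD_basisVec (by omega) (by omega),
    show l - k - 1 = l - (k + 1) by omega, show l - k + 1 - 1 = l - (k + 1) + 1 by omega]

end RootsD

theorem stmt_9_general (l : ℕ)
    (r : ℕ → Fin l → ℝ)
    (hr1 : r 1 = basisVec l (l - 2) + basisVec l (l - 1))
    (hr2 : r 2 = basisVec l (l - 2) - basisVec l (l - 1))
    (hr : ∀ i, 3 ≤ i → i ≤ l → r i = basisVec l (l - i) - basisVec l (l - i + 1))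
    (w : (Fin l → ℝ) → (Fin l → ℝ))
    (hw : w = (List.range l).foldr (fun k f => reflect (r (k + 1)) ∘ f) id) :
    ∀ i, 1 ≤ i → i ≤ l - 3 →
      (∃ y, (y = r 1 ∨ y = r 2) ∧ w^[i] (r 1) = y + ∑ k ∈ Finset.Icc 3 (i + 2), r k) ∧
      (∃ y, (y = r 1 ∨ y = r 2) ∧ w^[i] (r 2) = y + ∑ k ∈ Finset.Icc 3 (i + 2), r k) ∧
      (∃ c : ℕ → ℤ, w^[i] (r 1) = ∑ k ∈ Finset.Icc 1 (l - 1), (c k : ℝ) • r k) ∧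
      (∃ c : ℕ → ℤ, w^[i] (r 2) = ∑ k ∈ Finset.Icc 1 (l - 1), (c k : ℝ) • r k) := by
  intro i hi1 hi2
  rw [hw, foldr_reflect_eq_coxeterD (by omega) hr1 hr2 hr]
  have hr3 := hr 3 le_rfl (by omega)
  have hw_root (j₀ : ℕ) (hj₀ : j₀ = 1 ∨ j₀ = 2) :
      (∃ y, (y = r 1 ∨ y = r 2) ∧
        (⇑(coxeterD l))^[i] (r j₀) = y + ∑ k ∈ Finset.Icc 3 (i + 2), r k) ∧
      ∃ c : ℕ → ℤ, (⇑(coxeterD l))^[i] (r j₀) = ∑ k ∈ Finset.Icc 1 (l - 1), (c k : ℝ) • r k := by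
    obtain ⟨j, hj, hwj⟩ := iterate_apply_fork_root (coxeterD l) r
      (coxeterD_apply_root_one (by omega) hr1 hr2 hr3)
      (coxeterD_apply_root_two (by omega) hr1 hr2 hr3)
      (fun k hk hkl => coxeterD_apply_root_of_three_le hr hk (by omega)) hj₀ hi2
    refine ⟨⟨r j, by rcases hj with rfl | rfl <;> simp, hwj⟩, ?_⟩
    rw [hwj, ← Finset.sum_insert (by grind)]
    exact Finset.exists_intCast_smul_sum_eq_sum (by grind) r
  exact ⟨(hw_root 1 (.inl rfl)).1, (hw_root 2 (.inr rfl)).1, (hw_root 1 (.inl rfl)).2,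
    (hw_root 2 (.inr rfl)).2⟩

/-- Type `D_l` (fork at `r_3`): for the Coxeter element `w = w_1 ⋯ w_l` and
`1 ≤ i ≤ l-3`, both `w^i (r 1)` and `w^i (r 2)` are of the form
`y + r_3 + r_4 + ⋯ + r_{i+2}` with `y ∈ {r_1, r_2}`; in particular they lie in the
root subsystem generated by `r_1, …, r_{l-1}` (they are integral linear combinations
of `r_1, …, r_{l-1}`). -/
theorem stmt_9 (l : ℕ) (hl : 4 ≤ l)
    (r : ℕ → Fin l → ℝ)
    (hr1 : r 1 = basisVec l (l - 2) + basisVec l (l - 1))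
    (hr2 : r 2 = basisVec l (l - 2) - basisVec l (l - 1))
    (hr : ∀ i, 3 ≤ i → i ≤ l → r i = basisVec l (l - i) - basisVec l (l - i + 1))
    (w : (Fin l → ℝ) → (Fin l → ℝ))
    (hw : w = (List.range l).foldr (fun k f => reflect (r (k + 1)) ∘ f) id) :
    ∀ i, 1 ≤ i → i ≤ l - 3 →
      (∃ y, (y = r 1 ∨ y = r 2) ∧ w^[i] (r 1) = y + ∑ k ∈ Finset.Icc 3 (i + 2), r k) ∧
      (∃ y, (y = r 1 ∨ y = r 2) ∧ w^[i] (r 2) = y + ∑ k ∈ Finset.Icc 3 (i + 2), r k) ∧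
      (∃ c : ℕ → ℤ, w^[i] (r 1) = ∑ k ∈ Finset.Icc 1 (l - 1), (c k : ℝ) • r k) ∧
      (∃ c : ℕ → ℤ, w^[i] (r 2) = ∑ k ∈ Finset.Icc 1 (l - 1), (c k : ℝ) • r k) :=
  stmt_9_general l r hr1 hr2 hr w hw
end

section
/- In the root system of type A_{2n-1} with fundamental roots r_1,...,r_{2n-1}, the element w = (w_1 w_{2n-1})(w_2 w_{2n-2})...(w_{n-1} w_{n+1}) w_n satisfies w(r_k) = r_{k+1} for 1 ≤ k ≤ n-2. Consequently w^i(r_1) = r_{i+1} for 1 ≤ i ≤ n-2. -/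
open Matrix

/-! The reflection in `e_a - e_b` swaps the coordinates `a` and `b`, so `w` permutes the basis
vectors `e_c`. The reflections `w_{2n-k}` (`k < n`) only move coordinates `≥ n`, and `w_n` moves
only `n - 1` and `n`, so on `e_c` with `c < n - 1` the element `w` acts as the cycle
`(0 1)(1 2) ⋯ (n-2 n-1)`, i.e. `e_c ↦ e_{c+1}`; hence `r_k = e_{k-1} - e_k ↦ r_{k+1}`. -/

section
variable {N : ℕ}

lemma basisVec_eq_zero {c : ℕ} (hc : N ≤ c) : basisVec N c = 0 := by
  funext j
  simp only [basisVec, Pi.zero_apply, ite_eq_right_iff]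
  omega

lemma dotProduct_basisVec (x : Fin N → ℝ) {c : ℕ} (hc : c < N) :
    x ⬝ᵥ basisVec N c = x ⟨c, hc⟩ := by
  rw [dotProduct, Finset.sum_eq_single ⟨c, hc⟩]
  · simp [basisVec]
  · intro j _ hj
    simp [basisVec, Fin.val_ne_iff.mpr hj]
  · simp

lemma reflect_sub (v x y : Fin N → ℝ) : reflect v (x - y) = reflect v x - reflect v y := by
  simp only [reflect, dotProduct_sub, mul_sub, sub_div, sub_smul]
  abel

lemma reflect_basisVec {a b : ℕ} (ha : a < N) (hb : b < N) (hab : a ≠ b) (c : ℕ) :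
    reflect (basisVec N a - basisVec N b) (basisVec N c) = basisVec N (Equiv.swap a b c) := by
  rcases lt_or_ge c N with hc | hc
  · have hvv : (basisVec N a - basisVec N b) ⬝ᵥ (basisVec N a - basisVec N b) = 2 := by
      norm_num [dotProduct_sub, dotProduct_basisVec _ ha, dotProduct_basisVec _ hb, basisVec, hab,
        Ne.symm hab]
    rw [reflect, hvv, dotProduct_basisVec _ hc, Equiv.swap_apply_def]
    split_ifs <;> subst_vars <;> simp [basisVec, Ne.symm hab, *]
  · rw [Equiv.swap_apply_of_ne_of_ne (by omega) (by omega), basisVec_eq_zero hc]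
    simp [reflect]

lemma reflect_basisVec_sub {a b : ℕ} (ha : a < N) (hb : b < N) (hab : a ≠ b) (c d : ℕ) :
    reflect (basisVec N a - basisVec N b) (basisVec N c - basisVec N d) =
      basisVec N (Equiv.swap a b c) - basisVec N (Equiv.swap a b d) := by
  rw [reflect_sub, reflect_basisVec ha hb hab, reflect_basisVec ha hb hab]

end

lemma swap_apply_shift (j c : ℕ) :
    Equiv.swap j (j + 1) (if c < j + 1 then c else c + 1) = if c < j then c else c + 1 := by
  rw [Equiv.swap_apply_def]
  split_ifs <;> omega

/-- The tail of `w` starting at the factor `w_{j+1} w_{2n-1-j}` acts on `e_c`, `c < n - 1`, as the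
cycle `(j j+1)(j+1 j+2) ⋯ (n-2 n-1)`. -/
lemma foldr_reflect_basisVec_sub (n : ℕ) (r : ℕ → Fin (2 * n) → ℝ)
    (hr : ∀ i, 1 ≤ i → i ≤ 2 * n - 1 →
      r i = basisVec (2 * n) (i - 1) - basisVec (2 * n) i)
    {c d : ℕ} (hc : c < n - 1) (hd : d < n - 1) {j m : ℕ} (hjm : j + m = n - 1) :
    (List.range' j m).foldr
        (fun k f => reflect (r (k + 1)) ∘ reflect (r (2 * n - 1 - k)) ∘ f) (reflect (r n))
        (basisVec (2 * n) c - basisVec (2 * n) d) =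
      basisVec (2 * n) (if c < j then c else c + 1) -
        basisVec (2 * n) (if d < j then d else d + 1) := by
  induction m generalizing j with
  | zero =>
    rw [List.range'_zero, List.foldr_nil, hr n (by omega) (by omega),
      reflect_basisVec_sub (by omega) (by omega) (by omega),
      Equiv.swap_apply_of_ne_of_ne (by omega) (by omega),
      Equiv.swap_apply_of_ne_of_ne (by omega) (by omega), if_pos (by omega), if_pos (by omega)]
  | succ m ih =>
    have hhigh : ∀ e, e < n - 1 →
        Equiv.swap (2 * n - 1 - j - 1) (2 * n - 1 - j) (if e < j + 1 then e else e + 1) =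
          (if e < j + 1 then e else e + 1) := fun e he =>
      Equiv.swap_apply_of_ne_of_ne (by split_ifs <;> omega) (by split_ifs <;> omega)
    rw [List.range'_succ, List.foldr_cons, Function.comp_apply, Function.comp_apply,
      ih (by omega), hr (2 * n - 1 - j) (by omega) (by omega),
      reflect_basisVec_sub (by omega) (by omega) (by omega), hhigh c hc, hhigh d hd,
      hr (j + 1) (by omega) (by omega), Nat.add_sub_cancel,
      reflect_basisVec_sub (by omega) (by omega) (by omega), swap_apply_shift, swap_apply_shift]

theorem iterate_apply_eq_of_apply_eq_succ {α : Type*} (f : α → α) (r : ℕ → α) {m : ℕ}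
    (h : ∀ k, 1 ≤ k → k ≤ m → f (r k) = r (k + 1)) {i : ℕ} (hi : i ≤ m) :
    f^[i] (r 1) = r (i + 1) := by
  induction i with
  | zero => rfl
  | succ i ih => rw [Function.iterate_succ_apply', ih (by omega), h (i + 1) (by omega) hi]

theorem stmt_10_general (n : ℕ)
    (r : ℕ → Fin (2 * n) → ℝ)
    (hr : ∀ i, 1 ≤ i → i ≤ 2 * n - 1 → r i = basisVec (2 * n) (i - 1) - basisVec (2 * n) i)
    (w : (Fin (2 * n) → ℝ) → (Fin (2 * n) → ℝ))
    (hw : w = (List.range (n - 1)).foldr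
      (fun k f => reflect (r (k + 1)) ∘ reflect (r (2 * n - 1 - k)) ∘ f) (reflect (r n))) :
    (∀ k, 1 ≤ k → k ≤ n - 2 → w (r k) = r (k + 1)) ∧
    ∀ i, 1 ≤ i → i ≤ n - 2 → w^[i] (r 1) = r (i + 1) := by
  have hshift : ∀ k, 1 ≤ k → k ≤ n - 2 → w (r k) = r (k + 1) := by
    intro k hk1 hk2
    rw [hw, List.range_eq_range', hr k hk1 (by omega),
      foldr_reflect_basisVec_sub n r hr (by omega) (by omega) (by omega), if_neg (by omega),
      if_neg (by omega), Nat.sub_add_cancel hk1, hr (k + 1) (by omega) (by omega),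
      Nat.add_sub_cancel]
  exact ⟨hshift, fun i _ hi => iterate_apply_eq_of_apply_eq_succ w r hshift hi⟩

/-- Type `A_{2n-1}` with fundamental roots `r i = e_{i-1} - e_i` in `ℝ^{2n}`:
the twisted Coxeter element `w = (w_1 w_{2n-1})(w_2 w_{2n-2}) ⋯ (w_{n-1} w_{n+1}) w_n`
satisfies `w (r k) = r (k+1)` for `1 ≤ k ≤ n-2`, and consequently
`w^i (r 1) = r (i+1)` for `1 ≤ i ≤ n-2`. -/
theorem stmt_10 (n : ℕ) (hn : 2 ≤ n)
    (r : ℕ → Fin (2 * n) → ℝ)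
    (hr : ∀ i, 1 ≤ i → i ≤ 2 * n - 1 → r i = basisVec (2 * n) (i - 1) - basisVec (2 * n) i)
    (w : (Fin (2 * n) → ℝ) → (Fin (2 * n) → ℝ))
    (hw : w = (List.range (n - 1)).foldr
      (fun k f => reflect (r (k + 1)) ∘ reflect (r (2 * n - 1 - k)) ∘ f) (reflect (r n))) :
    (∀ k, 1 ≤ k → k ≤ n - 2 → w (r k) = r (k + 1)) ∧
    ∀ i, 1 ≤ i → i ≤ n - 2 → w^[i] (r 1) = r (i + 1) :=
  stmt_10_general n r hr w hw
end

section
/- For every l ≥ 1 and every prime power q, the matrices A = I + e_{1,2} (elementary transvection T_{1,2}(1)), B the (l+1)×(l+1) matrix with (1, l+1) entry (-1)^l, subdiagonal entries 1 and zeros elsewhere, and C = diag(λ^{-1}, λ, 1, ..., 1) where λ generates GF(q)^*, together generate SL(l+1, q). -/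
/-!
Special linear groups over a field are generated by the elementary transvections `T_ij(c)`,
so it suffices to put all of them into `H = ⟨A, B, C⟩`. For fixed `i ≠ j` the coefficients
`c` with `T_ij(c) ∈ H` form an additive subgroup of `F`. Conjugation by the diagonal matrix `C`
multiplies the coefficients at `(0, 1)` by `λ⁻²`; since `A = T_01(1)`, this subgroup contains
every power of `λ²`, hence every square, hence every sum of two squares, which in a finite field
is everything. Conjugation by the signed cyclic shift `B` carries `T_ij(c)` to `T_{i+1,j+1}(±c)`,
which gives all `T_{i,i+1}`, and the commutator identity `⁅T_ik(c), T_kj(1)⁆ = T_ij(c)` then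
gives all transvections by induction on `j - i`.
-/

open scoped commutatorElement

lemma Matrix.mul_transvection_of_monomial {ι F : Type*} [Fintype ι] [DecidableEq ι] [Field F]
    {σ : Equiv.Perm ι} {s : ι → F} {M : Matrix ι ι F}
    (hM : ∀ x y, M x y = if x = σ y then s y else 0) {j : ι} (hs : s j ≠ 0) (i : ι) (c : F) :
    M * transvection i j c = transvection (σ i) (σ j) (s i * c / s j) * M := by
  ext x y
  by_cases hy : y = j <;> by_cases hx : x = σ i
  · subst hy hx
    rw [mul_transvection_apply_same, transvection_mul_apply_same, hM, hM, hM]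
    simp [div_mul_cancel₀ _ hs, mul_comm]
  · subst hy
    rw [mul_transvection_apply_same, transvection_mul_apply_of_ne _ _ _ _ hx, hM x i]
    simp [hx]
  · subst hx
    rw [mul_transvection_apply_of_ne _ _ _ _ hy, transvection_mul_apply_same, hM (σ j) y]
    simp [Ne.symm hy]
  · rw [mul_transvection_apply_of_ne _ _ _ _ hy, transvection_mul_apply_of_ne _ _ _ _ hx]

namespace Matrix.SpecialLinearGroup

section CommRing

variable {ι R : Type*} [Fintype ι] [DecidableEq ι] [CommRing R]

lemma commutatorElement_transvection {i j k : ι} (hik : i ≠ k) (hkj : k ≠ j) (hij : i ≠ j)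
    (c : R) : ⁅transvection hik c, transvection hkj 1⁆ = transvection hij c := by
  rw [commutatorElement_def, transvection_inv, transvection_inv]
  refine Subtype.ext ?_
  simp only [coe_mul, transvection_coe, mul_add, add_mul, mul_one, one_mul,
    single_mul_single_same, single_mul_single_of_ne _ _ _ _ hik.symm,
    single_mul_single_of_ne _ _ _ _ hkj.symm, single_mul_single_of_ne _ _ _ _ hij.symm]
  simp only [zero_mul, add_zero, mul_one, mul_neg, ← single_neg]
  abel

def transvectionCoeffs (H : Subgroup (SpecialLinearGroup ι R)) {i j : ι} (hij : i ≠ j) :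
    AddSubgroup R where
  carrier := {c | transvection hij c ∈ H}
  add_mem' ha hb := by
    simpa only [Set.mem_ofPred_eq, transvection_add] using mul_mem ha hb
  zero_mem' := by simp [one_mem]
  neg_mem' {c} ha := by
    simpa only [Set.mem_ofPred_eq, transvection_inv] using
      inv_mem (show transvection hij c ∈ H from ha)

variable {H : Subgroup (SpecialLinearGroup ι R)}

@[simp]
lemma mem_transvectionCoeffs {i j : ι} {hij : i ≠ j} {c : R} :
    c ∈ transvectionCoeffs H hij ↔ transvection hij c ∈ H := Iff.rfl

lemma transvectionCoeffs_le_of_one_mem {i j k : ι} (hik : i ≠ k) (hkj : k ≠ j) (hij : i ≠ j)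
    (h1 : 1 ∈ transvectionCoeffs H hkj) :
    transvectionCoeffs H hik ≤ transvectionCoeffs H hij := by
  intro c hc
  rw [mem_transvectionCoeffs] at hc h1 ⊢
  have := mul_mem (mul_mem (mul_mem hc h1) (inv_mem hc)) (inv_mem h1)
  rwa [← commutatorElement_def, commutatorElement_transvection hik hkj hij] at this

lemma transvectionCoeffs_eq_top_of_adjacent {n : ℕ}
    {H : Subgroup (SpecialLinearGroup (Fin (n + 1)) R)}
    (hadj : ∀ (i j : Fin (n + 1)) (h : i ≠ j), j = i + 1 → transvectionCoeffs H h = ⊤)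
    {i j : Fin (n + 1)} (hij : i ≠ j) : transvectionCoeffs H hij = ⊤ := by
  suffices ∀ (k i j : Fin (n + 1)) (h : i ≠ j), j = i + k → transvectionCoeffs H h = ⊤ from
    this (j - i) i j hij (add_sub_cancel i j).symm
  refine Fin.induction (fun i _ h hj => absurd (hj.trans (add_zero i)) h.symm) ?_
  intro k ih i j hij hj
  rw [← Fin.coeSucc_eq_succ, ← add_assoc] at hj
  by_cases hk : k.castSucc = 0
  · exact hadj i j hij (by rwa [hk, add_zero] at hj)
  have hik : i ≠ i + k.castSucc := by simpa using hk
  have h1 : (1 : Fin (n + 1)) ≠ 0 := by simpa [Fin.one_eq_zero_iff] using k.pos.ne'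
  have hkj : i + k.castSucc ≠ j := by simpa [hj] using h1.symm
  exact eq_top_iff.2 <| (ih i _ hik rfl).ge.trans
    (transvectionCoeffs_le_of_one_mem hik hkj hij (hadj _ _ hkj hj ▸ AddSubgroup.mem_top 1))

end CommRing

variable {ι F : Type*} [Fintype ι] [DecidableEq ι] [Field F]

lemma diag2n_eq_transvection_prod {i j : ι} (hij : i ≠ j) (a : F) (ha : a ≠ 0) :
    diag2n hij a ha = transvection hij a * transvection hij.symm (-a⁻¹) * transvection hij a *
      transvection hij (-1) * transvection hij.symm 1 * transvection hij (-1) := by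
  refine Subtype.ext ?_
  simp only [coe_mul, transvection_coe, diag2n_coe, mul_add, add_mul, mul_one, one_mul,
    single_mul_single_same, single_mul_single_of_ne _ _ _ _ hij,
    single_mul_single_of_ne _ _ _ _ hij.symm]
  ext x y
  have trichotomy : ∀ z, z = i ∨ z = j ∨ (z ≠ i ∧ z ≠ j) := by tauto
  obtain rfl | rfl | ⟨hxi, hxj⟩ := trichotomy x <;>
    obtain rfl | rfl | ⟨hyi, hyj⟩ := trichotomy y <;>
    simp_all [diagonal_apply, one_apply, eq_comm]

theorem eq_top_of_transvection_mem [Nontrivial ι] {H : Subgroup (SpecialLinearGroup ι F)}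
    (hH : ∀ (i j : ι) (hij : i ≠ j) (c : F), transvection hij c ∈ H) : H = ⊤ := by
  refine eq_top_iff.2 fun g _ =>
    diagonal_transvection_induction' (· ∈ H) g ?_ hH fun _ _ => mul_mem
  intro i j hij c hc
  rw [diag2n_eq_transvection_prod]
  exact mul_mem (mul_mem (mul_mem (mul_mem (mul_mem (hH _ _ _ _) (hH _ _ _ _)) (hH _ _ _ _))
    (hH _ _ _ _)) (hH _ _ _ _)) (hH _ _ _ _)

lemma conj_transvection_of_monomial (g : SpecialLinearGroup ι F) {σ : Equiv.Perm ι}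
    {s : ι → F} (hg : ∀ x y, (g : Matrix ι ι F) x y = if x = σ y then s y else 0)
    {i j : ι} (hij : i ≠ j) (hs : s j ≠ 0) (c : F) :
    g * transvection hij c * g⁻¹ = transvection (σ.injective.ne hij) (s i * c / s j) := by
  rw [mul_inv_eq_iff_eq_mul]
  exact Subtype.ext (mul_transvection_of_monomial hg hs i c)

variable {H : Subgroup (SpecialLinearGroup ι F)}

lemma div_mem_transvectionCoeffs_of_monomial {g : SpecialLinearGroup ι F} (hgH : g ∈ H)
    {σ : Equiv.Perm ι} {s : ι → F}
    (hg : ∀ x y, (g : Matrix ι ι F) x y = if x = σ y then s y else 0)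
    {i j : ι} (hij : i ≠ j) (hs : s j ≠ 0) {c : F} (hc : c ∈ transvectionCoeffs H hij) :
    s i * c / s j ∈ transvectionCoeffs H (σ.injective.ne hij) := by
  rw [mem_transvectionCoeffs, ← conj_transvection_of_monomial g hg hij hs]
  exact mul_mem (mul_mem hgH hc) (inv_mem hgH)

lemma div_mem_transvectionCoeffs_of_diagonal {g : SpecialLinearGroup ι F} (hgH : g ∈ H)
    {d : ι → F} (hg : (g : Matrix ι ι F) = diagonal d) {i j : ι} (hij : i ≠ j) (hd : d j ≠ 0)
    {c : F} (hc : c ∈ transvectionCoeffs H hij) : d i * c / d j ∈ transvectionCoeffs H hij :=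
  div_mem_transvectionCoeffs_of_monomial (σ := 1) hgH
    (fun x y => by by_cases h : x = y <;> simp [hg, h]) hij hd hc

lemma transvectionCoeffs_eq_top_of_monomial {g : SpecialLinearGroup ι F} (hgH : g ∈ H)
    {σ : Equiv.Perm ι} {s : ι → F}
    (hg : ∀ x y, (g : Matrix ι ι F) x y = if x = σ y then s y else 0)
    (hs : ∀ k, s k ≠ 0) {i j : ι} (hij : i ≠ j) (htop : transvectionCoeffs H hij = ⊤) :
    transvectionCoeffs H (σ.injective.ne hij) = ⊤ := by
  refine eq_top_iff.2 fun c _ => ?_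
  have := div_mem_transvectionCoeffs_of_monomial hgH hg hij (hs j)
    (htop ▸ AddSubgroup.mem_top (s j * c / s i))
  rwa [mul_div_cancel₀ _ (hs i), mul_div_cancel_left₀ _ (hs j)] at this

lemma transvectionCoeffs_succ_eq_top_of_finRotate {n : ℕ}
    {H : Subgroup (SpecialLinearGroup (Fin (n + 1)) F)} {g : SpecialLinearGroup (Fin (n + 1)) F}
    (hgH : g ∈ H) {s : Fin (n + 1) → F}
    (hg : ∀ x y, (g : Matrix (Fin (n + 1)) (Fin (n + 1)) F) x y =
      if x = finRotate (n + 1) y then s y else 0)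
    (hs : ∀ k, s k ≠ 0) (h0 : ∀ h : (0 : Fin (n + 1)) ≠ 1, transvectionCoeffs H h = ⊤) :
    ∀ (i j : Fin (n + 1)) (h : i ≠ j), j = i + 1 → transvectionCoeffs H h = ⊤ := by
  refine Fin.induction ?_ fun i ih => ?_
  · rintro j h rfl
    simp only [zero_add]
    exact h0 _
  · rintro j h rfl
    have h' : i.castSucc ≠ i.castSucc + 1 := by
      rw [Ne, left_eq_add] at h ⊢
      exact h
    simpa only [finRotate_apply, Fin.coeSucc_eq_succ] using
      transvectionCoeffs_eq_top_of_monomial hgH hg hs h' (ih _ h' rfl)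

end Matrix.SpecialLinearGroup

open Polynomial in
theorem FiniteField.exists_sq_add_sq {F : Type*} [Field F] [Fintype F] (x : F) :
    ∃ a b : F, a ^ 2 + b ^ 2 = x := by
  by_cases hF : ringChar F = 2
  · obtain ⟨a, rfl⟩ := isSquare_of_char_two hF x
    exact ⟨a, 0, by ring⟩
  · obtain ⟨a, b, hab⟩ := exists_root_sum_quadratic (f := X ^ 2) (g := X ^ 2 - C x)
      (degree_X_pow 2) (degree_X_pow_sub_C two_pos x) (odd_card_of_char_ne_two hF)
    refine ⟨a, b, ?_⟩
    simp only [eval_pow, eval_X, eval_sub, eval_C] at hab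
    linear_combination hab

theorem AddSubgroup.eq_top_of_one_mem_of_sq_mul_mem {F : Type*} [Field F] [Fintype F]
    {S : AddSubgroup F} {u : Fˣ} (hu : ∀ x, x ∈ Subgroup.zpowers u) (h1 : 1 ∈ S)
    (hmul : ∀ c ∈ S, (u : F) ^ 2 * c ∈ S) : S = ⊤ := by
  have hpow : ∀ n : ℕ, (u : F) ^ (2 * n) ∈ S := by
    intro n
    induction n with
    | zero => simpa using h1
    | succ n ih =>
      rw [mul_add, mul_one, pow_add, mul_comm]
      exact hmul _ ih
  have hsq : ∀ a : F, a ^ 2 ∈ S := by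
    intro a
    rcases eq_or_ne a 0 with rfl | ha
    · simp
    · obtain ⟨n, hn⟩ := mem_powers_iff_mem_zpowers.mpr (hu (Units.mk0 a ha))
      have : a = (u : F) ^ n := by simpa using congrArg Units.val hn.symm
      rw [this, ← pow_mul, mul_comm]
      exact hpow n
  refine eq_top_iff.2 fun x _ => ?_
  obtain ⟨a, b, rfl⟩ := FiniteField.exists_sq_add_sq x
  exact add_mem (hsq a) (hsq b)

lemma signedShift_apply_eq_ite_finRotate {F : Type*} [Field F] {l : ℕ}
    {M : Matrix (Fin (l + 1)) (Fin (l + 1)) F}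
    (hM : ∀ i j : Fin (l + 1), M i j =
      if (i : ℕ) = 0 ∧ (j : ℕ) = l then (-1 : F) ^ l else if (i : ℕ) = (j : ℕ) + 1 then 1 else 0)
    (i j : Fin (l + 1)) :
    M i j = if i = finRotate (l + 1) j then (if (j : ℕ) = l then (-1 : F) ^ l else 1) else 0 := by
  rw [hM]
  by_cases hj : (j : ℕ) = l
  · obtain rfl : j = Fin.last l := Fin.ext hj
    have : (i : ℕ) ≠ l + 1 := i.isLt.ne
    simp only [Fin.val_last, finRotate_last, and_true, if_true, this, if_false,
      Fin.val_eq_zero_iff]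
  · have hlt : j < Fin.last l := lt_of_le_of_ne (Fin.le_last j) (fun h => hj (by simp [h]))
    simp only [hj, and_false, if_false, Fin.ext_iff (a := i), coe_finRotate_of_ne_last hlt.ne]

open Matrix.SpecialLinearGroup in
/-- The matrices `A = T_{1,2}(1)`, `B` (signed cyclic shift, with `(1, l+1)` entry
`(-1)^l`, subdiagonal entries `1` and zeros elsewhere) and
`C = diag(λ⁻¹, λ, 1, …, 1)`, where `λ` generates the multiplicative group of the
finite field `F = GF(q)`, generate `SL(l+1, q)`. -/
theorem stmt_14 {F : Type*} [Field F] [Fintype F] (l : ℕ) (hl : 1 ≤ l)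
    (lam : Fˣ) (hlam : ∀ x : Fˣ, x ∈ Subgroup.zpowers lam)
    (A B C : Matrix.SpecialLinearGroup (Fin (l + 1)) F)
    (hA : (A : Matrix (Fin (l + 1)) (Fin (l + 1)) F) = 1 + Matrix.single 0 1 1)
    (hB : ∀ i j : Fin (l + 1),
      (B : Matrix (Fin (l + 1)) (Fin (l + 1)) F) i j =
        if (i : ℕ) = 0 ∧ (j : ℕ) = l then (-1 : F) ^ l
        else if (i : ℕ) = (j : ℕ) + 1 then 1 else 0)
    (hC : (C : Matrix (Fin (l + 1)) (Fin (l + 1)) F) =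
      Matrix.diagonal fun i : Fin (l + 1) =>
        if (i : ℕ) = 0 then ((lam⁻¹ : Fˣ) : F) else if (i : ℕ) = 1 then (lam : F) else 1) :
    Subgroup.closure {A, B, C} = ⊤ := by
  have : Nontrivial (Fin (l + 1)) := Fin.nontrivial_iff_two_le.2 (by omega)
  set H := Subgroup.closure {A, B, C}
  have hv1 : ((1 : Fin (l + 1)) : ℕ) = 1 := Nat.mod_eq_of_lt (by omega : 1 < l + 1)
  have h01 : (0 : Fin (l + 1)) ≠ 1 := by rw [Ne, Fin.ext_iff, hv1]; simp
  have hS01 : transvectionCoeffs H h01 = ⊤ := by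
    refine AddSubgroup.eq_top_of_one_mem_of_sq_mul_mem (u := lam⁻¹)
      (by simpa [Subgroup.zpowers_inv] using hlam) ?_ fun c hc => ?_
    · rw [mem_transvectionCoeffs, show transvection h01 1 = A from
        Subtype.ext ((transvection_coe _ _).trans hA.symm)]
      exact Subgroup.subset_closure (by simp)
    · have := div_mem_transvectionCoeffs_of_diagonal (Subgroup.subset_closure (by simp)) hC h01
        (by simp only [hv1, one_ne_zero, if_false, if_true]; exact lam.ne_zero) hc
      simp only [hv1, Fin.val_zero, if_true, one_ne_zero, if_false,
        Units.val_inv_eq_inv_val] at this ⊢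
      convert this using 1
      field_simp
  have hadj := transvectionCoeffs_succ_eq_top_of_finRotate (Subgroup.subset_closure (by simp))
    (signedShift_apply_eq_ite_finRotate hB) (by intro k; split_ifs <;> simp) fun _ => hS01
  exact eq_top_of_transvection_mem fun i j hij c =>
    (transvectionCoeffs_eq_top_of_adjacent hadj hij).ge (AddSubgroup.mem_top c)
end

section
/- Let G = SL(l+1,q) with l ≥ 5, let A = T_{1,2}(1), B the signed cyclic-shift matrix, C = diag(λ^{-1}, λ, 1,...,1) with λ a generator of GF(q)^*, and let S = ⋃_{i=0}^{l-1} S_0 B^i where S_0 = {block diag(D,1) : D ∈ SL(l,q)}. Then in the Cayley graph Cay(G, {A^{±1}, B^{±1}, C^{±1}}), the boundary ∂S is contained in the union of the 6 right cosets S_0 B^l, S_0 B^{-1}, S_0 B^{l-1}A, S_0 B^{l-1}A^{-1}, S_0 B^{l-1}C, S_0 B^{l-1}C^{-1}, so |∂S|/|S| ≤ 6/l. -/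
open Matrix
open scoped Pointwise

/-!
S₀ is the subgroup of `SL(l+1, q)` fixing the last basis vector `eₗ` both as a column and as a
row vector. Since `Bⁱ eₗ₋ᵢ = eₗ` and `eₗᵀ Bⁱ = eₗ₋ᵢᵀ`, conjugation by `Bⁱ` carries the two-sided
stabilizer of `eₗ₋ᵢ` onto S₀. For `i ≤ l - 2` the generators `A^{±1}, C^{±1}`, which only touch
the first two coordinates, fix `eₗ₋ᵢ`; hence `S₀ Bⁱ t = S₀ (Bⁱ t B⁻ⁱ) Bⁱ = S₀ Bⁱ`. So an edge can
leave `S` only from the coset `S₀ Bˡ⁻¹` or via `B^{±1}` from the two ends of the tower of cosets,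
which gives the six cosets; the cosets `S₀ Bⁱ`, `i < l`, are disjoint because `eₗᵀ Bᵈ ≠ eₗᵀ` for
`0 < d ≤ l`.
-/

namespace Set

variable {G : Type*} [Group G]

lemma mem_mul_singleton_iff {s : Set G} {x g : G} : x ∈ s * {g} ↔ x * g⁻¹ ∈ s := by
  simp

lemma ncard_mul_singleton (s : Set G) (g : G) : (s * {g}).ncard = s.ncard := by
  rw [Set.mul_singleton]
  exact Set.ncard_image_of_injective _ (mul_left_injective g)

end Set

section CosetTower

variable {G : Type*} [Group G] {H : Subgroup G} {b : G} {n : ℕ}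

def cayleyBoundary (T S : Set G) : Set G :=
  {x | x ∉ S ∧ ∃ s ∈ S, s⁻¹ * x ∈ T}

variable (H b n) in
def cosetTower : Set G :=
  ⋃ i ∈ Finset.range n, (H : Set G) * {b ^ i}

lemma mem_cosetTower_iff {x : G} : x ∈ cosetTower H b n ↔ ∃ i < n, x * (b ^ i)⁻¹ ∈ H := by
  simp only [cosetTower, Set.mem_iUnion, Finset.mem_range, Set.mem_mul_singleton_iff,
    SetLike.mem_coe, exists_prop]

lemma mul_mem_mul_singleton_pow_of_mem_cosetTower {s : G} (hs : s ∈ cosetTower H b n)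
    (hsb : s * b ∉ cosetTower H b n) : s * b ∈ (H : Set G) * {b ^ n} := by
  rw [mem_cosetTower_iff] at hs hsb
  obtain ⟨i, hi, hsi⟩ := hs
  have hsbi : s * b * (b ^ (i + 1))⁻¹ ∈ H := by simpa [pow_succ, mul_assoc] using hsi
  obtain rfl : i + 1 = n := by
    by_contra hne
    exact hsb ⟨i + 1, by omega, hsbi⟩
  rwa [Set.mem_mul_singleton_iff]

lemma mul_inv_mem_mul_singleton_inv_of_mem_cosetTower {s : G} (hs : s ∈ cosetTower H b n)
    (hsb : s * b⁻¹ ∉ cosetTower H b n) : s * b⁻¹ ∈ (H : Set G) * {b⁻¹} := by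
  rw [mem_cosetTower_iff] at hs hsb
  obtain ⟨i, hi, hsi⟩ := hs
  cases i with
  | zero => simpa [Set.mem_mul_singleton_iff] using hsi
  | succ j => exact absurd ⟨j, by omega, by simpa [pow_succ, mul_assoc] using hsi⟩ hsb

lemma mul_mem_mul_singleton_of_mem_cosetTower_of_conj_mem {s t : G}
    (ht : ∀ i, i + 2 ≤ n → b ^ i * t * (b ^ i)⁻¹ ∈ H) (hs : s ∈ cosetTower H b n)
    (hst : s * t ∉ cosetTower H b n) : s * t ∈ (H : Set G) * {b ^ (n - 1) * t} := by
  rw [mem_cosetTower_iff] at hs hst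
  obtain ⟨i, hi, hsi⟩ := hs
  obtain rfl : i = n - 1 := by
    by_contra hne
    exact hst ⟨i, hi, by simpa [mul_assoc] using H.mul_mem hsi (ht i (by omega))⟩
  rw [Set.mem_mul_singleton_iff]
  simpa [mul_assoc] using hsi

lemma ncard_cosetTower (hH : (H : Set G).Finite) (hb : ∀ d, 0 < d → d < n → b ^ d ∉ H) :
    (cosetTower H b n).ncard = n * (H : Set G).ncard := by
  have hdisj : (↑(Finset.range n) : Set ℕ).PairwiseDisjoint fun i => (H : Set G) * {b ^ i} := by
    have key {i j : ℕ} (hij : i < j) (hj : j < n) :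
        Disjoint ((H : Set G) * {b ^ i}) (H * {b ^ j}) :=
      Set.disjoint_left.2 fun x hxi hxj => hb (j - i) (by omega) (by omega) <| by
        rw [Set.mem_mul_singleton_iff] at hxi hxj
        simpa [pow_sub _ hij.le, mul_assoc] using H.mul_mem (H.inv_mem hxj) hxi
    intro i hi j hj hij
    simp only [Finset.coe_range, Set.mem_Iio] at hi hj
    rcases lt_or_gt_of_ne hij with h | h
    exacts [key h hj, (key h hi).symm]
  have hcard := (Finset.range n).finite_toSet.ncard_biUnion
    (fun i _ => hH.mul (Set.finite_singleton (b ^ i))) hdisj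
  rw [finsum_mem_coe_finset] at hcard
  simp only [Set.ncard_mul_singleton, Finset.sum_const, Finset.card_range, smul_eq_mul] at hcard
  exact hcard

variable (H b n) in
lemma cayleyBoundary_cosetTower_subset {a c : G}
    (ha : ∀ i, i + 2 ≤ n → b ^ i * a * (b ^ i)⁻¹ ∈ H)
    (hc : ∀ i, i + 2 ≤ n → b ^ i * c * (b ^ i)⁻¹ ∈ H) :
    cayleyBoundary {a, a⁻¹, b, b⁻¹, c, c⁻¹} (cosetTower H b n) ⊆
      (H : Set G) * {b ^ n} ∪ H * {b⁻¹} ∪ H * {b ^ (n - 1) * a} ∪ H * {b ^ (n - 1) * a⁻¹} ∪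
        H * {b ^ (n - 1) * c} ∪ H * {b ^ (n - 1) * c⁻¹} := by
  have conj_inv {t : G} (ht : ∀ i, i + 2 ≤ n → b ^ i * t * (b ^ i)⁻¹ ∈ H) (i : ℕ)
      (hi : i + 2 ≤ n) : b ^ i * t⁻¹ * (b ^ i)⁻¹ ∈ H := by
    simpa [mul_assoc] using H.inv_mem (ht i hi)
  rintro x ⟨hx, s, hs, hsx⟩
  obtain ⟨t, ht, rfl⟩ : ∃ t ∈ ({a, a⁻¹, b, b⁻¹, c, c⁻¹} : Set G), x = s * t :=
    ⟨_, hsx, (mul_inv_cancel_left s x).symm⟩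
  rcases ht with rfl | rfl | rfl | rfl | rfl | rfl
  · exact .inl <| .inl <| .inl <| .inr <|
      mul_mem_mul_singleton_of_mem_cosetTower_of_conj_mem ha hs hx
  · exact .inl <| .inl <| .inr <|
      mul_mem_mul_singleton_of_mem_cosetTower_of_conj_mem (conj_inv ha) hs hx
  · exact .inl <| .inl <| .inl <| .inl <| .inl <| mul_mem_mul_singleton_pow_of_mem_cosetTower hs hx
  · exact .inl <| .inl <| .inl <| .inl <| .inr <|
      mul_inv_mem_mul_singleton_inv_of_mem_cosetTower hs hx
  · exact .inl <| .inr <| mul_mem_mul_singleton_of_mem_cosetTower_of_conj_mem hc hs hx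
  · exact .inr <| mul_mem_mul_singleton_of_mem_cosetTower_of_conj_mem (conj_inv hc) hs hx

lemma ncard_cayleyBoundary_cosetTower_div_le {a c : G} (hH : (H : Set G).Finite)
    (hb : ∀ d, 0 < d → d < n → b ^ d ∉ H)
    (ha : ∀ i, i + 2 ≤ n → b ^ i * a * (b ^ i)⁻¹ ∈ H)
    (hc : ∀ i, i + 2 ≤ n → b ^ i * c * (b ^ i)⁻¹ ∈ H) :
    ((cayleyBoundary {a, a⁻¹, b, b⁻¹, c, c⁻¹} (cosetTower H b n)).ncard : ℝ) /
      (cosetTower H b n).ncard ≤ 6 / n := by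
  have hbd : (cayleyBoundary {a, a⁻¹, b, b⁻¹, c, c⁻¹} (cosetTower H b n)).ncard ≤
      6 * (H : Set G).ncard := by
    have hfin (g : G) : ((H : Set G) * {g}).Finite := hH.mul (Set.finite_singleton g)
    refine (Set.ncard_le_ncard (cayleyBoundary_cosetTower_subset H b n ha hc)
      (by simp only [Set.finite_union, hfin, and_self])).trans ?_
    grw [Set.ncard_union_le, Set.ncard_union_le, Set.ncard_union_le, Set.ncard_union_le,
      Set.ncard_union_le]
    simp only [Set.ncard_mul_singleton]
    omega
  have hH0 : 0 < (H : Set G).ncard := (Set.ncard_pos hH).2 ⟨1, H.one_mem⟩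
  rw [ncard_cosetTower hH hb]
  calc (_ : ℝ) / ↑(n * (H : Set G).ncard)
      ≤ ↑(6 * (H : Set G).ncard) / ↑(n * (H : Set G).ncard) := by gcongr
    _ = 6 / n := by push_cast; exact mul_div_mul_right _ _ (by positivity)

end CosetTower

namespace Matrix.SpecialLinearGroup

variable {n R : Type*} [Fintype n] [DecidableEq n] [CommRing R]

lemma inv_mulVec_eq_of_mulVec_eq {g : SpecialLinearGroup n R} {u v : n → R}
    (h : (g : Matrix n n R) *ᵥ u = v) :
    ((g⁻¹ : SpecialLinearGroup n R) : Matrix n n R) *ᵥ v = u := by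
  rw [← h, mulVec_mulVec, ← coe_mul, inv_mul_cancel, coe_one, one_mulVec]

lemma vecMul_inv_eq_of_vecMul_eq {g : SpecialLinearGroup n R} {u v : n → R}
    (h : v ᵥ* (g : Matrix n n R) = u) :
    u ᵥ* ((g⁻¹ : SpecialLinearGroup n R) : Matrix n n R) = v := by
  rw [← h, vecMul_vecMul, ← coe_mul, mul_inv_cancel, coe_one, vecMul_one]

def twoSidedStabilizer (v : n → R) : Subgroup (SpecialLinearGroup n R) where
  carrier := {g | (g : Matrix n n R) *ᵥ v = v ∧ v ᵥ* (g : Matrix n n R) = v}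
  mul_mem' := by
    rintro g h ⟨hg, hg'⟩ ⟨hh, hh'⟩
    simp only [Set.mem_ofPred, coe_mul, ← mulVec_mulVec, ← vecMul_vecMul, hg, hh, hg', hh',
      and_self]
  one_mem' := by simp
  inv_mem' := fun ⟨hg, hg'⟩ => ⟨inv_mulVec_eq_of_mulVec_eq hg, vecMul_inv_eq_of_vecMul_eq hg'⟩

lemma mem_twoSidedStabilizer {v : n → R} {g : SpecialLinearGroup n R} :
    g ∈ twoSidedStabilizer v ↔ (g : Matrix n n R) *ᵥ v = v ∧ v ᵥ* (g : Matrix n n R) = v :=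
  Iff.rfl

lemma conj_mem_twoSidedStabilizer {g t : SpecialLinearGroup n R} {u v : n → R}
    (hgu : (g : Matrix n n R) *ᵥ u = v) (hvg : v ᵥ* (g : Matrix n n R) = u)
    (ht : t ∈ twoSidedStabilizer u) : g * t * g⁻¹ ∈ twoSidedStabilizer v := by
  obtain ⟨htu, hut⟩ := ht
  refine ⟨?_, ?_⟩
  · rw [coe_mul, ← mulVec_mulVec, inv_mulVec_eq_of_mulVec_eq hgu, coe_mul, ← mulVec_mulVec, htu,
      hgu]
  · rw [coe_mul, coe_mul, ← vecMul_vecMul, ← vecMul_vecMul, hvg, hut,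
      vecMul_inv_eq_of_vecMul_eq hvg]

lemma mem_twoSidedStabilizer_single_of_coe_eq_one_add_single {g : SpecialLinearGroup n R}
    {i j k : n} {c : R} (hki : k ≠ i) (hkj : k ≠ j) (hg : (g : Matrix n n R) = 1 + single i j c) :
    g ∈ twoSidedStabilizer (Pi.single k 1) := by
  rw [mem_twoSidedStabilizer, hg]
  constructor <;> ext m <;> simp [Pi.single_apply, one_apply, hki.symm, hkj.symm, eq_comm]

lemma mem_twoSidedStabilizer_single_of_coe_eq_diagonal {g : SpecialLinearGroup n R}
    {d : n → R} {k : n} (hk : d k = 1) (hg : (g : Matrix n n R) = diagonal d) :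
    g ∈ twoSidedStabilizer (Pi.single k 1) := by
  rw [mem_twoSidedStabilizer, hg, diagonal_mulVec_single, single_vecMul_diagonal, hk, one_mul]
  exact ⟨rfl, rfl⟩

lemma mem_twoSidedStabilizer_single_last_iff {m : ℕ} {g : SpecialLinearGroup (Fin (m + 1)) R} :
    g ∈ twoSidedStabilizer (Pi.single (Fin.last m) 1) ↔
      ∃ D : Matrix (Fin m) (Fin m) R, D.det = 1 ∧
        (g : Matrix (Fin (m + 1)) (Fin (m + 1)) R) =
          reindex finSumFinEquiv finSumFinEquiv (fromBlocks D 0 0 1) := by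
  simp only [mem_twoSidedStabilizer, mulVec_single_one, single_one_vecMul, funext_iff,
    Fin.forall_fin_succ', col_apply, row_apply, Pi.single_apply, Fin.castSucc_ne_last, if_false,
    if_true]
  constructor
  · rintro ⟨⟨hcol, hlast⟩, hrow, -⟩
    have hg : (g : Matrix (Fin (m + 1)) (Fin (m + 1)) R) = reindex finSumFinEquiv finSumFinEquiv
        (fromBlocks ((g : Matrix _ _ R).submatrix Fin.castSucc Fin.castSucc) 0 0 1) := by
      ext a b
      induction a using Fin.lastCases <;> induction b using Fin.lastCases <;>
        simp [finSumFinEquiv_symm_last, finSumFinEquiv_symm_apply_castSucc, hcol, hrow, hlast]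
    refine ⟨_, ?_, hg⟩
    have hdet := g.det_coe
    rwa [hg, det_reindex_self, det_fromBlocks_zero₂₁, det_one, mul_one] at hdet
  · rintro ⟨D, -, hg⟩
    simp [hg, finSumFinEquiv_symm_last, finSumFinEquiv_symm_apply_castSucc]

end Matrix.SpecialLinearGroup

namespace Matrix

variable {R : Type*} [CommRing R] {m : ℕ}

/-- `B eⱼ = eⱼ₊₁` for `j < m` and `B eₘ = c e₀`. -/
def IsCyclicShift (c : R) (B : Matrix (Fin (m + 1)) (Fin (m + 1)) R) : Prop :=
  ∀ i j : Fin (m + 1),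
    B i j = if (i : ℕ) = 0 ∧ (j : ℕ) = m then c else if (i : ℕ) = j + 1 then 1 else 0

variable {c : R} {B : Matrix (Fin (m + 1)) (Fin (m + 1)) R}

lemma IsCyclicShift.mulVec_single {j : ℕ} (hB : IsCyclicShift c B) (hj : j < m) :
    B *ᵥ Pi.single ⟨j, by omega⟩ 1 = Pi.single ⟨j + 1, by omega⟩ 1 := by
  ext k
  simp only [mulVec_single_one, col_apply, hB k, Pi.single_apply, Fin.ext_iff]
  split_ifs <;> first | rfl | omega

lemma IsCyclicShift.single_vecMul {j : ℕ} (hB : IsCyclicShift c B) (hj : j < m) :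
    Pi.single ⟨j + 1, by omega⟩ 1 ᵥ* B = Pi.single ⟨j, by omega⟩ 1 := by
  ext k
  simp [hB _ k, Pi.single_apply, Fin.ext_iff, eq_comm]

lemma IsCyclicShift.pow_mulVec_single {i j : ℕ} (hB : IsCyclicShift c B) (hij : i + j = m) :
    B ^ i *ᵥ Pi.single ⟨j, by omega⟩ 1 = Pi.single (Fin.last m) 1 := by
  induction i generalizing j with
  | zero =>
    obtain rfl : j = m := by omega
    rw [pow_zero, one_mulVec]; rfl
  | succ i ih => rw [pow_succ, ← mulVec_mulVec, hB.mulVec_single (by omega), ih (by omega)]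

lemma IsCyclicShift.single_last_vecMul_pow {i j : ℕ} (hB : IsCyclicShift c B) (hij : i + j = m) :
    Pi.single (Fin.last m) 1 ᵥ* B ^ i = Pi.single ⟨j, by omega⟩ 1 := by
  induction i generalizing j with
  | zero =>
    obtain rfl : j = m := by omega
    rw [pow_zero, vecMul_one]; rfl
  | succ i ih =>
    rw [pow_succ, ← vecMul_vecMul, ih (j := j + 1) (by omega), hB.single_vecMul (by omega)]

end Matrix

section

open Matrix.SpecialLinearGroup

namespace Matrix.IsCyclicShift

variable {R : Type*} [CommRing R] {m : ℕ} {c : R} {B : SpecialLinearGroup (Fin (m + 1)) R}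

lemma pow_conj_mem_twoSidedStabilizer
    (hB : IsCyclicShift c (B : Matrix (Fin (m + 1)) (Fin (m + 1)) R))
    {t : SpecialLinearGroup (Fin (m + 1)) R}
    (ht : ∀ k : Fin (m + 1), 2 ≤ (k : ℕ) → t ∈ twoSidedStabilizer (Pi.single k 1))
    (i : ℕ) (hi : i + 2 ≤ m) :
    B ^ i * t * (B ^ i)⁻¹ ∈ twoSidedStabilizer (Pi.single (Fin.last m) 1) :=
  conj_mem_twoSidedStabilizer
    (by rw [coe_pow]; exact hB.pow_mulVec_single (j := m - i) (by omega))
    (by rw [coe_pow]; exact hB.single_last_vecMul_pow (j := m - i) (by omega))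
    (ht _ (show 2 ≤ m - i by omega))

lemma pow_notMem_twoSidedStabilizer [Nontrivial R]
    (hB : IsCyclicShift c (B : Matrix (Fin (m + 1)) (Fin (m + 1)) R)) {d : ℕ}
    (hd : 0 < d) (hdm : d ≤ m) : B ^ d ∉ twoSidedStabilizer (Pi.single (Fin.last m) 1) := by
  rintro ⟨-, h⟩
  rw [coe_pow, hB.single_last_vecMul_pow (j := m - d) (by omega)] at h
  have := congrFun h (Fin.last m)
  rw [Pi.single_eq_same, Pi.single_apply, if_neg (by simp [Fin.ext_iff]; omega)] at this
  exact zero_ne_one this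

end Matrix.IsCyclicShift

end

theorem stmt_18_general {F : Type*} [Field F] [Fintype F] (l : ℕ)
    (lam : Fˣ)
    (A B C : Matrix.SpecialLinearGroup (Fin (l + 1)) F)
    (hA : (A : Matrix (Fin (l + 1)) (Fin (l + 1)) F) = 1 + Matrix.single 0 1 1)
    (hB : ∀ i j : Fin (l + 1),
      (B : Matrix (Fin (l + 1)) (Fin (l + 1)) F) i j =
        if (i : ℕ) = 0 ∧ (j : ℕ) = l then (-1 : F) ^ l
        else if (i : ℕ) = (j : ℕ) + 1 then 1 else 0)
    (hC : (C : Matrix (Fin (l + 1)) (Fin (l + 1)) F) =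
      Matrix.diagonal fun i : Fin (l + 1) =>
        if (i : ℕ) = 0 then ((lam⁻¹ : Fˣ) : F) else if (i : ℕ) = 1 then (lam : F) else 1)
    (S0 : Set (Matrix.SpecialLinearGroup (Fin (l + 1)) F))
    (hS0 : S0 = {M : Matrix.SpecialLinearGroup (Fin (l + 1)) F |
      ∃ D : Matrix (Fin l) (Fin l) F, D.det = 1 ∧
      (M : Matrix (Fin (l + 1)) (Fin (l + 1)) F) =
        Matrix.reindex finSumFinEquiv finSumFinEquiv (Matrix.fromBlocks D 0 0 1)})
    (S : Set (Matrix.SpecialLinearGroup (Fin (l + 1)) F))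
    (hS : S = ⋃ i ∈ Finset.range l, S0 * {B ^ i})
    (T : Set (Matrix.SpecialLinearGroup (Fin (l + 1)) F))
    (hT : T = {A, A⁻¹, B, B⁻¹, C, C⁻¹}) :
    {x | x ∉ S ∧ ∃ s ∈ S, s⁻¹ * x ∈ T} ⊆
      S0 * {B ^ l} ∪ S0 * {B⁻¹} ∪ S0 * {B ^ (l - 1) * A} ∪ S0 * {B ^ (l - 1) * A⁻¹} ∪
        S0 * {B ^ (l - 1) * C} ∪ S0 * {B ^ (l - 1) * C⁻¹} ∧
    (({x | x ∉ S ∧ ∃ s ∈ S, s⁻¹ * x ∈ T}).ncard : ℝ) / S.ncard ≤ 6 / l := by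
  set H := SpecialLinearGroup.twoSidedStabilizer (Pi.single (Fin.last l) (1 : F))
  have hS0H : S0 = H := by
    ext g
    rw [hS0, SetLike.mem_coe, SpecialLinearGroup.mem_twoSidedStabilizer_single_last_iff]
    rfl
  have hB' : IsCyclicShift ((-1) ^ l) (B : Matrix (Fin (l + 1)) (Fin (l + 1)) F) := hB
  have hA' := hB'.pow_conj_mem_twoSidedStabilizer fun k hk =>
    SpecialLinearGroup.mem_twoSidedStabilizer_single_of_coe_eq_one_add_single
      (Fin.ne_of_val_ne (by rw [Fin.val_zero]; omega))
      (Fin.ne_of_val_ne (by rw [Fin.val_one']; have := Nat.mod_le 1 (l + 1); omega)) hA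
  have hC' := hB'.pow_conj_mem_twoSidedStabilizer fun k hk =>
    SpecialLinearGroup.mem_twoSidedStabilizer_single_of_coe_eq_diagonal
      (by rw [if_neg (by omega), if_neg (by omega)]) hC
  subst hS hT hS0H
  exact ⟨cayleyBoundary_cosetTower_subset H B l hA' hC',
    ncard_cayleyBoundary_cosetTower_div_le (Set.toFinite _)
      (fun d hd hdl => hB'.pow_notMem_twoSidedStabilizer hd hdl.le) hA' hC'⟩

/-- For `G = SL(l+1, q)` with `l ≥ 5`, `A = T_{1,2}(1)`, `B` the signed cyclic-shift
matrix, `C = diag(λ⁻¹, λ, 1, …, 1)` with `λ` a generator of `GF(q)ˣ`, and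
`S = ⋃_{i=0}^{l-1} S₀ B^i` with `S₀ = {block diag(D,1) : D ∈ SL(l,q)}`:
in `Cay(G, {A^{±1}, B^{±1}, C^{±1}})` the boundary `∂S` is contained in the union of
the six right cosets `S₀B^l, S₀B⁻¹, S₀B^{l-1}A, S₀B^{l-1}A⁻¹, S₀B^{l-1}C, S₀B^{l-1}C⁻¹`,
hence `|∂S| / |S| ≤ 6 / l`. -/
theorem stmt_18 {F : Type*} [Field F] [Fintype F] (l : ℕ) (hl : 5 ≤ l)
    (lam : Fˣ) (hlam : ∀ x : Fˣ, x ∈ Subgroup.zpowers lam)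
    (A B C : Matrix.SpecialLinearGroup (Fin (l + 1)) F)
    (hA : (A : Matrix (Fin (l + 1)) (Fin (l + 1)) F) = 1 + Matrix.single 0 1 1)
    (hB : ∀ i j : Fin (l + 1),
      (B : Matrix (Fin (l + 1)) (Fin (l + 1)) F) i j =
        if (i : ℕ) = 0 ∧ (j : ℕ) = l then (-1 : F) ^ l
        else if (i : ℕ) = (j : ℕ) + 1 then 1 else 0)
    (hC : (C : Matrix (Fin (l + 1)) (Fin (l + 1)) F) =
      Matrix.diagonal fun i : Fin (l + 1) =>
        if (i : ℕ) = 0 then ((lam⁻¹ : Fˣ) : F) else if (i : ℕ) = 1 then (lam : F) else 1)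
    (S0 : Set (Matrix.SpecialLinearGroup (Fin (l + 1)) F))
    (hS0 : S0 = {M : Matrix.SpecialLinearGroup (Fin (l + 1)) F |
      ∃ D : Matrix (Fin l) (Fin l) F, D.det = 1 ∧
      (M : Matrix (Fin (l + 1)) (Fin (l + 1)) F) =
        Matrix.reindex finSumFinEquiv finSumFinEquiv (Matrix.fromBlocks D 0 0 1)})
    (S : Set (Matrix.SpecialLinearGroup (Fin (l + 1)) F))
    (hS : S = ⋃ i ∈ Finset.range l, S0 * {B ^ i})
    (T : Set (Matrix.SpecialLinearGroup (Fin (l + 1)) F))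
    (hT : T = {A, A⁻¹, B, B⁻¹, C, C⁻¹}) :
    {x | x ∉ S ∧ ∃ s ∈ S, s⁻¹ * x ∈ T} ⊆
      S0 * {B ^ l} ∪ S0 * {B⁻¹} ∪ S0 * {B ^ (l - 1) * A} ∪ S0 * {B ^ (l - 1) * A⁻¹} ∪
        S0 * {B ^ (l - 1) * C} ∪ S0 * {B ^ (l - 1) * C⁻¹} ∧
    (({x | x ∉ S ∧ ∃ s ∈ S, s⁻¹ * x ∈ T}).ncard : ℝ) / S.ncard ≤ 6 / l :=
  stmt_18_general l lam A B C hA hB hC S0 hS0 S hS T hT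
end
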